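/- Let A be a self-adjoint operator on a separable Hilbert space with orthonormal eigenbasis (e_j) and eigenvalues λ_j ≤ 0, and let τ > 0. Define S̃(z) = S(z)/z³ where S(z) = a e^z + (1/2)e^{2āz} + ā - z⁻¹(e^z - 1), a = (1/4)(1 - i/√3). If v ∈ D(A²), then ‖(τA)² S̃(τA) v‖ ≤ C τ² ‖A² v‖ for a constant C independent of τ and v. -/

import Mathlib

/-!
Since `(τA)² S̃(τA) = τ² S̃(τA) A²`, it suffices that `S̃` is bounded on `(-∞, 0]`.
For `|z| ≤ 1` the relations `a + ā = 1/2` and `a/2 + ā² = 1/6` turn `z S(z)` into a combination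
of Taylor remainders of `exp` of orders 3 and 4, whence `|S(z)| ≤ |z|³`. For real `x ≤ 0` every
term of `S(x)` is bounded (`e^x ≤ 1`, `Re(2āx) = x/2`, `|e^x - 1| ≤ |x|`), so `|S̃(x)| ≤ |S(x)|`
is bounded once `|x| ≥ 1`.
-/

noncomputable def a : ℂ := (1/4) * (1 - Complex.I / Real.sqrt 3)
noncomputable def abar : ℂ := (1/4) * (1 + Complex.I / Real.sqrt 3)

noncomputable def S (z : ℂ) : ℂ :=
  if z = 0 then 0 else
    a * Complex.exp z + (1/2) * Complex.exp (2 * abar * z) + abar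
      - z⁻¹ * (Complex.exp z - 1)

noncomputable def Stilde (z : ℂ) : ℂ := S z / z ^ 3

open Complex Finset
open scoped Nat

lemma a_add_abar : a + abar = 1 / 2 := by
  unfold a abar; ring

lemma a_div_two_add_abar_sq : a / 2 + abar ^ 2 = 1 / 6 := by
  have h3 : ((√3 : ℝ) : ℂ) ^ 2 = 3 := by norm_cast; simp
  unfold a abar
  field_simp
  linear_combination 4 * h3 + 12 * I_sq

lemma norm_I_div_sqrt_three_le : ‖I / (√3 : ℝ)‖ ≤ 1 := by
  rw [norm_div, norm_I, norm_real, Real.norm_of_nonneg (Real.sqrt_nonneg 3)]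
  exact div_le_one_of_le₀ (Real.one_le_sqrt.mpr (by norm_num)) (Real.sqrt_nonneg 3)

lemma norm_a_le : ‖a‖ ≤ 1 / 2 := by
  calc ‖a‖ ≤ ‖(1 / 4 : ℂ)‖ * (‖(1 : ℂ)‖ + ‖I / (√3 : ℝ)‖) := by
        rw [a, norm_mul]; gcongr; exact norm_sub_le _ _
    _ ≤ 1 / 4 * (1 + 1) := by
        gcongr
        · norm_num
        · norm_num
        · exact norm_I_div_sqrt_three_le
    _ = 1 / 2 := by norm_num

lemma norm_abar_le : ‖abar‖ ≤ 1 / 2 := by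
  calc ‖abar‖ ≤ ‖(1 / 4 : ℂ)‖ * (‖(1 : ℂ)‖ + ‖I / (√3 : ℝ)‖) := by
        rw [abar, norm_mul]; gcongr; exact norm_add_le _ _
    _ ≤ 1 / 4 * (1 + 1) := by
        gcongr
        · norm_num
        · norm_num
        · exact norm_I_div_sqrt_three_le
    _ = 1 / 2 := by norm_num

lemma re_two_mul_abar_mul_ofReal (x : ℝ) : (2 * abar * x).re = x / 2 := by
  rw [mul_comm, re_ofReal_mul, show (2 * abar).re = 1 / 2 by norm_num [abar]]
  ring

lemma mul_S_eq_of_ne_zero {z : ℂ} (hz : z ≠ 0) :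
    z * S z = a * z * (exp z - ∑ m ∈ range 3, z ^ m / m !)
      + z / 2 * (exp (2 * abar * z) - ∑ m ∈ range 3, (2 * abar * z) ^ m / m !)
      - (exp z - ∑ m ∈ range 4, z ^ m / m !) := by
  simp only [S, if_neg hz, sum_range_succ, sum_range_zero, Nat.factorial]
  push_cast
  linear_combination (1 - exp z) * mul_inv_cancel₀ hz + (z + z ^ 2) * a_add_abar
    + z ^ 3 * a_div_two_add_abar_sq

lemma norm_S_le_of_norm_le_one {z : ℂ} (hz : ‖z‖ ≤ 1) : ‖S z‖ ≤ ‖z‖ ^ 3 := by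
  rcases eq_or_ne z 0 with rfl | hz0
  · simp [S]
  have hzS : ‖z‖ * ‖S z‖ ≤ ‖z‖ * ‖z‖ ^ 3 := by
    rw [← norm_mul, mul_S_eq_of_ne_zero hz0]
    set w := 2 * abar * z
    have hw : ‖w‖ ≤ ‖z‖ := by
      rw [norm_mul, norm_mul, RCLike.norm_ofNat]
      nlinarith [norm_abar_le, norm_nonneg z]
    have hE1 := exp_bound hz (n := 3) (by norm_num)
    have hE2 := exp_bound (hw.trans hz) (n := 3) (by norm_num)
    have hE3 := exp_bound hz (n := 4) (by norm_num)
    norm_num [Nat.factorial] at hE1 hE2 hE3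
    calc _ ≤ ‖a * z * (exp z - ∑ m ∈ range 3, z ^ m / (m ! : ℂ))‖
          + ‖z / 2 * (exp w - ∑ m ∈ range 3, w ^ m / (m ! : ℂ))‖
          + ‖exp z - ∑ m ∈ range 4, z ^ m / (m ! : ℂ)‖ :=
          (norm_sub_le _ _).trans (add_le_add_left (norm_add_le _ _) _)
      _ ≤ 1 / 2 * ‖z‖ * (‖z‖ ^ 3 * (2 / 9)) + ‖z‖ / 2 * (‖z‖ ^ 3 * (2 / 9))
          + ‖z‖ ^ 4 * (5 / 96) := by
        rw [norm_mul, norm_mul, norm_mul, norm_div, RCLike.norm_ofNat]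
        gcongr
        · exact norm_a_le
        · exact hE2.trans (by gcongr)
      _ ≤ ‖z‖ * ‖z‖ ^ 3 := by
        ring_nf
        nlinarith [pow_nonneg (norm_nonneg z) 4]
  exact le_of_mul_le_mul_left hzS (norm_pos_iff.mpr hz0)

lemma norm_exp_ofReal_sub_one_le_of_nonpos {x : ℝ} (hx : x ≤ 0) :
    ‖exp (x : ℂ) - 1‖ ≤ ‖(x : ℂ)‖ := by
  rw [← ofReal_exp, ← ofReal_one, ← ofReal_sub, norm_real, norm_real, Real.norm_eq_abs,
    Real.norm_eq_abs, abs_of_nonpos (by simpa using hx), abs_of_nonpos hx]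
  linarith [Real.add_one_le_exp x]

lemma norm_S_ofReal_le_of_nonpos {x : ℝ} (hx : x ≤ 0) : ‖S x‖ ≤ 3 := by
  rcases eq_or_ne (x : ℂ) 0 with hx0 | hx0
  · simp [S, hx0]
  have hexp : ‖exp (x : ℂ)‖ ≤ 1 := by
    rw [norm_exp_ofReal]; exact Real.exp_le_one_iff.mpr hx
  have hexp2 : ‖exp (2 * abar * x)‖ ≤ 1 := by
    rw [norm_exp, re_two_mul_abar_mul_ofReal]; exact Real.exp_le_one_iff.mpr (by linarith)
  have hquot : ‖(x : ℂ)⁻¹ * (exp x - 1)‖ ≤ 1 := by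
    rw [norm_mul, norm_inv]
    exact inv_mul_le_one_of_le₀ (norm_exp_ofReal_sub_one_le_of_nonpos hx) (norm_nonneg _)
  rw [S, if_neg hx0]
  calc _ ≤ ‖a‖ * ‖exp (x : ℂ)‖ + 1 / 2 * ‖exp (2 * abar * x)‖ + ‖abar‖
        + ‖(x : ℂ)⁻¹ * (exp x - 1)‖ := by
        refine (norm_sub_le _ _).trans (add_le_add_left ((norm_add_le _ _).trans
          (add_le_add_left ((norm_add_le _ _).trans_eq ?_) _)) _)
        rw [norm_mul, norm_mul]; norm_num
    _ ≤ 1 / 2 * 1 + 1 / 2 * 1 + 1 / 2 + 1 := by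
        gcongr
        · exact norm_a_le
        · exact norm_abar_le
    _ ≤ 3 := by norm_num

lemma norm_Stilde_ofReal_le_of_nonpos {x : ℝ} (hx : x ≤ 0) : ‖Stilde x‖ ≤ 3 := by
  rw [Stilde, norm_div, norm_pow]
  rcases le_total ‖(x : ℂ)‖ 1 with hsmall | hbig
  · rcases eq_or_ne (x : ℂ) 0 with hx0 | hx0
    · simp [hx0]
    calc ‖S x‖ / ‖(x : ℂ)‖ ^ 3 ≤ 1 :=
          (div_le_one (by positivity)).mpr (norm_S_le_of_norm_le_one hsmall)
      _ ≤ 3 := by norm_num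
  · exact (div_le_self (norm_nonneg _) (one_le_pow₀ hbig)).trans (norm_S_ofReal_le_of_nonpos hx)

lemma sqrt_tsum_norm_sq_le_of_norm_le {ι E F : Type*} [SeminormedAddCommGroup E]
    [SeminormedAddCommGroup F] {f : ι → E} {g : ι → F} {c : ℝ} (hc : 0 ≤ c)
    (hfg : ∀ j, ‖f j‖ ≤ c * ‖g j‖) (hg : Summable fun j => ‖g j‖ ^ 2) :
    √(∑' j, ‖f j‖ ^ 2) ≤ c * √(∑' j, ‖g j‖ ^ 2) := by
  have hsq : ∀ j, ‖f j‖ ^ 2 ≤ c ^ 2 * ‖g j‖ ^ 2 := fun j => by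
    rw [← mul_pow]; exact pow_le_pow_left₀ (norm_nonneg _) (hfg j) 2
  have hsum : ∑' j, ‖f j‖ ^ 2 ≤ c ^ 2 * ∑' j, ‖g j‖ ^ 2 := by
    rw [← tsum_mul_left]
    exact Summable.tsum_le_tsum hsq
      (.of_nonneg_of_le (fun j => by positivity) hsq (hg.mul_left _)) (hg.mul_left _)
  calc √(∑' j, ‖f j‖ ^ 2) ≤ √(c ^ 2 * ∑' j, ‖g j‖ ^ 2) := Real.sqrt_le_sqrt hsum
    _ = c * √(∑' j, ‖g j‖ ^ 2) := by rw [Real.sqrt_mul (sq_nonneg c), Real.sqrt_sq hc]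

/-- Diagonal formulation: the self-adjoint operator `A` has eigenvalues `λ j ≤ 0`
with respect to an orthonormal eigenbasis; a vector is identified with its sequence
of coefficients `v : ℕ → ℂ`, membership in `D(A²)` with square summability of
`λ_j² v_j`, and `(τA)² S̃(τA)` acts diagonally by multiplication by
`(τλ_j)² S̃(τλ_j)`. -/
theorem stmt14 (lam : ℕ → ℝ) (hlam : ∀ j, lam j ≤ 0) :
    ∃ C : ℝ, 0 < C ∧ ∀ (τ : ℝ), 0 < τ → ∀ v : ℕ → ℂ,
      Summable (fun j => ‖((lam j : ℂ)) ^ 2 * v j‖ ^ 2) →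
      Real.sqrt (∑' j, ‖((τ * lam j : ℂ)) ^ 2 * Stilde (τ * lam j) * v j‖ ^ 2)
        ≤ C * τ ^ 2 * Real.sqrt (∑' j, ‖((lam j : ℂ)) ^ 2 * v j‖ ^ 2) := by
  refine ⟨3, by norm_num, fun τ hτ v hv => sqrt_tsum_norm_sq_le_of_norm_le (by positivity)
    (fun j => ?_) hv⟩
  have hS := norm_Stilde_ofReal_le_of_nonpos (mul_nonpos_of_nonneg_of_nonpos hτ.le (hlam j))
  push_cast at hS
  calc ‖(τ * lam j : ℂ) ^ 2 * Stilde (τ * lam j) * v j‖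
      = ‖Stilde (τ * lam j)‖ * τ ^ 2 * ‖(lam j : ℂ) ^ 2 * v j‖ := by
        simp only [norm_mul, norm_pow, norm_real, Real.norm_eq_abs]
        rw [mul_pow, sq_abs, sq_abs]; ring
    _ ≤ 3 * τ ^ 2 * ‖(lam j : ℂ) ^ 2 * v j‖ := by gcongr
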